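/- arXiv:1305.0127 — 2 statements merged into one kernel-verified Lean document; each statement's English description precedes it below -/
import Mathlib

section
/- For any n ≥ 1 and any recurrent set S, the set S ∩ A^n of words of S of length n is an S-maximal bifix code of S-degree n. -/
namespace Paper

variable {A : Type*}

/-- A set of words is factorial if it contains all factors of its elements. -/
def Factorial (S : Set (List A)) : Prop := ∀ w ∈ S, ∀ u : List A, u <:+: w → u ∈ S

def Lext (S : Set (List A)) (w : List A) : Set A := {a | a :: w ∈ S}
def Rext (S : Set (List A)) (w : List A) : Set A := {a | w ++ [a] ∈ S}
def Eext (S : Set (List A)) (w : List A) : Set (A × A) := {p | p.1 :: (w ++ [p.2]) ∈ S}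

def ExtVertex (S : Set (List A)) (w : List A) :=
  {v : A ⊕ A // Sum.elim (fun a => a ∈ Lext S w) (fun b => b ∈ Rext S w) v}

/-- The extension graph of `w` in `S`. -/
def extGraph (S : Set (List A)) (w : List A) : SimpleGraph (ExtVertex S w) where
  Adj u v := (∃ a b, u.1 = Sum.inl a ∧ v.1 = Sum.inr b ∧ (a, b) ∈ Eext S w) ∨
             (∃ a b, u.1 = Sum.inr b ∧ v.1 = Sum.inl a ∧ (a, b) ∈ Eext S w)
  symm := by
    constructor
    rintro u v (⟨a, b, h1, h2, h3⟩ | ⟨a, b, h1, h2, h3⟩)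
    · exact Or.inr ⟨a, b, h2, h1, h3⟩
    · exact Or.inl ⟨a, b, h2, h1, h3⟩
  loopless := by
    constructor
    rintro u (⟨a, b, h1, h2, _⟩ | ⟨a, b, h1, h2, _⟩) <;> rw [h1] at h2 <;> simp at h2

def IsPrefixCode (X : Set (List A)) : Prop :=
  (∀ x ∈ X, x ≠ []) ∧ ∀ x ∈ X, ∀ y ∈ X, x <+: y → x = y

def IsSuffixCode (X : Set (List A)) : Prop :=
  (∀ x ∈ X, x ≠ []) ∧ ∀ x ∈ X, ∀ y ∈ X, x <:+ y → x = y

def IsBifixCode (X : Set (List A)) : Prop := IsPrefixCode X ∧ IsSuffixCode X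

/-- The submonoid `X*` generated by a set of words. -/
def starOf (X : Set (List A)) : Set (List A) :=
  {m | ∃ ls : List (List A), (∀ u ∈ ls, u ∈ X) ∧ m = ls.flatten}

/-- A parse of `w` with respect to `X` : `w = v ++ x ++ u`, `v` has no suffix in `X`,
`x ∈ X*`, `u` has no prefix in `X`. -/
def IsParse (X : Set (List A)) (w : List A) (p : List A × List A × List A) : Prop :=
  w = p.1 ++ p.2.1 ++ p.2.2 ∧ (∀ s, s <:+ p.1 → s ∉ X) ∧ p.2.1 ∈ starOf X ∧
    (∀ t, t <+: p.2.2 → t ∉ X)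

noncomputable def parseCount (X : Set (List A)) (w : List A) : ℕ :=
  {p : List A × List A × List A | IsParse X w p}.ncard

/-- `X` has `S`-degree `d`. -/
def SDegreeIs (S X : Set (List A)) (d : ℕ) : Prop :=
  (∀ w ∈ S, parseCount X w ≤ d) ∧ ∃ w ∈ S, parseCount X w = d

def IsSMaximalBifixCode (S X : Set (List A)) : Prop :=
  IsBifixCode X ∧ X ⊆ S ∧ ∀ Y : Set (List A), IsBifixCode Y → Y ⊆ S → X ⊆ Y → Y = X

def Recurrent (S : Set (List A)) : Prop :=
  Factorial S ∧ S ≠ {[]} ∧ S.Nonempty ∧ ∀ u ∈ S, ∀ w ∈ S, ∃ v, u ++ v ++ w ∈ S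

def UniformlyRecurrent (S : Set (List A)) : Prop :=
  Factorial S ∧ (∀ w ∈ S, ∃ a : A, w ++ [a] ∈ S) ∧
    ∀ u ∈ S, ∃ n : ℕ, ∀ w ∈ S, w.length = n → u <:+: w

/-- The element of the free group corresponding to a word. -/
def toFG (w : List A) : FreeGroup A := (w.map FreeGroup.of).prod

/-- `T` is a basis of the subgroup `H` of the free group on `A`. -/
def IsBasisOf (T : Set (FreeGroup A)) (H : Subgroup (FreeGroup A)) : Prop :=
  Function.Injective (FreeGroup.lift (Subtype.val : T → FreeGroup A)) ∧
  (FreeGroup.lift (Subtype.val : T → FreeGroup A)).range = H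


/-!
Since `S` is factorial, a factorization `w = v x u` of a word `w ∈ S` is a parse with respect
to `S ∩ Aⁿ` exactly when `|v| < n`, `n ∣ |x|` and `|u| < n`, a condition that no longer involves
`S`.
Such a parse is determined by `|v|`, which can be any `i < n` with `i ≤ |w|`, so `w` has
`min n (|w| + 1)` parses; recurrence provides words of every length. For maximality, a word `y`
of a bifix code `Y ⊇ S ∩ Aⁿ` contained in `S` is a prefix of a word of `S` of length at least
`n`, whose prefix of length `n` lies in `Y` and is comparable with `y`.
-/

lemma isBifixCode_of_forall_length_eq {X : Set (List A)} {n : ℕ} (hn : 0 < n)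
    (hX : ∀ x ∈ X, x.length = n) : IsBifixCode X := by
  have hne : ∀ x ∈ X, x ≠ [] := fun x hx h => by simp [h, ← hX x hx] at hn
  exact ⟨⟨hne, fun x hx y hy h => h.eq_of_length ((hX x hx).trans (hX y hy).symm)⟩,
    ⟨hne, fun x hx y hy h => h.eq_of_length ((hX x hx).trans (hX y hy).symm)⟩⟩

lemma append_mem_starOf {X : Set (List A)} {x y : List A} (hx : x ∈ X) (hy : y ∈ starOf X) :
    x ++ y ∈ starOf X := by
  obtain ⟨ls, hls, rfl⟩ := hy
  exact ⟨x :: ls, by simpa using ⟨hx, hls⟩, by simp⟩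

lemma dvd_length_of_mem_starOf {X : Set (List A)} {n : ℕ} (hX : ∀ x ∈ X, x.length = n)
    {x : List A} (hx : x ∈ starOf X) : n ∣ x.length := by
  obtain ⟨ls, hls, rfl⟩ := hx
  rw [List.length_flatten]
  exact List.dvd_sum fun m hm => by
    obtain ⟨u, hu, rfl⟩ := List.mem_map.mp hm
    exact (hX u (hls u hu)).symm ▸ dvd_rfl

lemma mod_eq_of_add_of_dvd {n j k m : ℕ} (hj : n ∣ j) (hk : k < n) (hm : j + k = m) :
    m % n = k := by
  obtain ⟨q, rfl⟩ := hj
  rw [← hm, mul_comm, Nat.mul_add_mod_of_lt hk]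

/-- The parses of `w` with respect to the code `Aⁿ` of all words of length `n`. -/
def uniformSplits (n : ℕ) (w : List A) : Set (List A × List A × List A) :=
  {p | w = p.1 ++ p.2.1 ++ p.2.2 ∧ p.1.length < n ∧ n ∣ p.2.1.length ∧ p.2.2.length < n}

section uniformSplits

variable {n : ℕ} {w : List A}

lemma length_snd_snd_of_mem_uniformSplits {p : List A × List A × List A}
    (hp : p ∈ uniformSplits n w) : p.2.2.length = (w.length - p.1.length) % n := by
  obtain ⟨hw, -, hx, hu⟩ := hp
  exact (mod_eq_of_add_of_dvd hx hu (by simp [hw])).symm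

lemma injOn_length_fst_uniformSplits :
    Set.InjOn (fun p : List A × List A × List A => p.1.length) (uniformSplits n w) := by
  rintro ⟨v, x, u⟩ hp ⟨v', x', u'⟩ hp' (hv : v.length = v'.length)
  have hu : u.length = u'.length := by
    rw [length_snd_snd_of_mem_uniformSplits hp, length_snd_snd_of_mem_uniformSplits hp']
    exact congrArg (fun i => (w.length - i) % n) hv
  obtain ⟨hvx, rfl⟩ := List.append_inj' (hp.1.symm.trans hp'.1) hu
  obtain ⟨rfl, rfl⟩ := List.append_inj hvx hv
  rfl

lemma mk_mem_uniformSplits (hn : 0 < n) {i : ℕ} (hi : i < min n (w.length + 1)) :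
    (w.take i, (w.drop i).take (n * ((w.length - i) / n)),
      (w.drop i).drop (n * ((w.length - i) / n))) ∈ uniformSplits n w := by
  have hdiv := Nat.div_add_mod (w.length - i) n
  have hmod := Nat.mod_lt (w.length - i) hn
  have hi' := lt_min_iff.mp hi
  refine ⟨by simp, ?_, ?_, ?_⟩
  · simp only [List.length_take]; omega
  · simp only [List.length_take, List.length_drop]
    rw [min_eq_left (by omega : n * ((w.length - i) / n) ≤ w.length - i)]
    exact dvd_mul_right n _
  · simp only [List.length_drop]; omega

lemma image_length_fst_uniformSplits (hn : 0 < n) :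
    (fun p : List A × List A × List A => p.1.length) '' uniformSplits n w =
      Set.Iio (min n (w.length + 1)) := by
  ext i
  constructor
  · rintro ⟨p, hp, rfl⟩
    have hv : p.1.length ≤ w.length := by rw [hp.1]; simp
    exact lt_min hp.2.1 (by omega)
  · intro (hi : i < _)
    refine ⟨_, mk_mem_uniformSplits hn hi, ?_⟩
    have := lt_min_iff.mp hi
    simp only [List.length_take]
    omega

lemma ncard_uniformSplits (hn : 0 < n) : (uniformSplits n w).ncard = min n (w.length + 1) := by
  rw [← injOn_length_fst_uniformSplits.ncard_image, image_length_fst_uniformSplits hn,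
    ← Finset.coe_Iio, Set.ncard_coe_finset, Nat.card_Iio]

end uniformSplits

section Factorial

variable {S : Set (List A)} {n : ℕ}

lemma forall_suffix_not_mem_iff (hS : Factorial S) {v : List A} (hv : v ∈ S) :
    (∀ s, s <:+ v → s ∉ {x ∈ S | x.length = n}) ↔ v.length < n := by
  refine ⟨fun h => ?_, fun h s hs hsX => by have := hs.length_le; have := hsX.2; omega⟩
  by_contra! hnv
  have hsuf := v.drop_suffix (v.length - n)
  exact h _ hsuf ⟨hS v hv _ hsuf.isInfix, by simp only [List.length_drop]; omega⟩

lemma forall_prefix_not_mem_iff (hS : Factorial S) {u : List A} (hu : u ∈ S) :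
    (∀ t, t <+: u → t ∉ {x ∈ S | x.length = n}) ↔ u.length < n := by
  refine ⟨fun h => ?_, fun h t ht htX => by have := ht.length_le; have := htX.2; omega⟩
  by_contra! hnu
  have hpre := u.take_prefix n
  exact h _ hpre ⟨hS u hu _ hpre.isInfix, by simp only [List.length_take]; omega⟩

lemma mem_starOf_iff (hS : Factorial S) {x : List A} (hx : x ∈ S) :
    x ∈ starOf {y ∈ S | y.length = n} ↔ n ∣ x.length := by
  refine ⟨dvd_length_of_mem_starOf fun _ h => h.2, ?_⟩
  rintro ⟨q, hq⟩
  induction q generalizing x with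
  | zero => exact ⟨[], by simp, by simpa using hq⟩
  | succ q ih =>
    rw [← x.take_append_drop n]
    have htake : x.take n ∈ {y ∈ S | y.length = n} :=
      ⟨hS x hx _ (x.take_prefix n).isInfix, by simp [hq, Nat.mul_succ]⟩
    refine append_mem_starOf htake ?_
    exact ih (hS x hx _ (x.drop_suffix n).isInfix) (by simp [hq, Nat.mul_succ])

lemma setOf_isParse_eq_uniformSplits (hS : Factorial S) {w : List A} (hw : w ∈ S) :
    {p | IsParse {x ∈ S | x.length = n} w p} = uniformSplits n w := by
  ext ⟨v, x, u⟩
  refine and_congr_right fun hvxu => ?_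
  subst hvxu
  have hv : v ∈ S := hS _ hw v ((v.prefix_append x).trans ((v ++ x).prefix_append u)).isInfix
  have hx : x ∈ S := hS _ hw x (List.infix_append v x u)
  have hu : u ∈ S := hS _ hw u ((v ++ x).suffix_append u).isInfix
  rw [forall_suffix_not_mem_iff hS hv, mem_starOf_iff hS hx, forall_prefix_not_mem_iff hS hu]

lemma parseCount_eq_min (hS : Factorial S) (hn : 0 < n) {w : List A} (hw : w ∈ S) :
    parseCount {x ∈ S | x.length = n} w = min n (w.length + 1) := by
  rw [parseCount, setOf_isParse_eq_uniformSplits hS hw, ncard_uniformSplits hn]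

end Factorial

namespace Recurrent

variable {S : Set (List A)}

lemma exists_ne_nil (hS : Recurrent S) : ∃ z ∈ S, z ≠ [] := by
  by_contra! h
  exact hS.2.1 (Set.eq_singleton_iff_nonempty_unique_mem.mpr ⟨hS.2.2.1, h⟩)

lemma exists_prefix_le_length (hS : Recurrent S) {u : List A} (hu : u ∈ S) (k : ℕ) :
    ∃ w ∈ S, u <+: w ∧ k ≤ w.length := by
  induction k with
  | zero => exact ⟨u, hu, List.prefix_refl u, Nat.zero_le _⟩
  | succ k ih =>
    obtain ⟨w, hw, huw, hk⟩ := ih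
    obtain ⟨z, hz, hz0⟩ := hS.exists_ne_nil
    obtain ⟨v, hwvz⟩ := hS.2.2.2 w hw z hz
    have hwp : w <+: w ++ v ++ z := (w.prefix_append v).trans ((w ++ v).prefix_append z)
    refine ⟨w ++ v ++ z, hwvz, huw.trans hwp, ?_⟩
    have := List.length_pos_iff.mpr hz0
    simp only [List.length_append]
    omega

lemma exists_length_eq (hS : Recurrent S) (k : ℕ) : ∃ w ∈ S, w.length = k := by
  obtain ⟨u, hu⟩ := hS.2.2.1
  obtain ⟨w, hw, -, hk⟩ := hS.exists_prefix_le_length hu k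
  refine ⟨w.take k, hS.1 w hw _ (w.take_prefix k).isInfix, ?_⟩
  simp only [List.length_take]
  omega

lemma isSMaximalBifixCode_length_eq (hS : Recurrent S) {n : ℕ} (hn : 0 < n) :
    IsSMaximalBifixCode S {w ∈ S | w.length = n} := by
  refine ⟨isBifixCode_of_forall_length_eq hn fun _ h => h.2, fun _ h => h.1,
    fun Y hY hYS hXY => Set.Subset.antisymm (fun y hy => ?_) hXY⟩
  obtain ⟨w, hw, hyw, hnw⟩ := hS.exists_prefix_le_length (hYS hy) n
  have hwn : w.take n ∈ {w ∈ S | w.length = n} :=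
    ⟨hS.1 w hw _ (w.take_prefix n).isInfix, by simp only [List.length_take]; omega⟩
  rcases le_total y.length n with hle | hle
  · rwa [hY.1.2 y hy _ (hXY hwn) (List.prefix_take_iff.mpr ⟨hyw, hle⟩)]
  · have hpre : w.take n <+: y :=
      List.prefix_of_prefix_length_le (w.take_prefix n) hyw (by simp only [List.length_take]; omega)
    rwa [← hY.1.2 _ (hXY hwn) y hy hpre]

end Recurrent

theorem uniform_code_is_S_maximal_bifix_general {A : Type*} (S : Set (List A))
    (hrec : Recurrent S) (n : ℕ) (hn : 1 ≤ n) :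
    IsSMaximalBifixCode S {w ∈ S | w.length = n} ∧
      SDegreeIs S {w ∈ S | w.length = n} n := by
  refine ⟨hrec.isSMaximalBifixCode_length_eq hn, fun w hw => ?_, ?_⟩
  · rw [parseCount_eq_min hrec.1 hn hw]
    exact min_le_left _ _
  · obtain ⟨w, hw, hlen⟩ := hrec.exists_length_eq n
    refine ⟨w, hw, ?_⟩
    rw [parseCount_eq_min hrec.1 hn hw, hlen]
    omega

/-- For any `n ≥ 1` and any recurrent set `S`, the set `S ∩ Aⁿ` is an
`S`-maximal bifix code of `S`-degree `n`. -/
theorem uniform_code_is_S_maximal_bifix {A : Type*} [Fintype A] (S : Set (List A))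
    (hrec : Recurrent S) (n : ℕ) (hn : 1 ≤ n) :
    IsSMaximalBifixCode S {w ∈ S | w.length = n} ∧
      SDegreeIs S {w ∈ S | w.length = n} n :=
  uniform_code_is_S_maximal_bifix_general S hrec n hn

end Paper
end

section
/- Let S be the Chacon set, the set of factors of the fixpoint of the morphism f(a) = aabc, f(b) = bc, f(c) = abc over A = {a,b,c}. Then the word abc is strong (m(abc) = 1 > 0) and the word bca is weak (m(bca) = −1 < 0); in particular S is not neutral. -/
namespace Paper

variable {A : Type*}

/-- The Chacon morphism `f(a) = aabc`, `f(b) = bc`, `f(c) = abc` over `A = {a, b, c}`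
encoded as `a = 0`, `b = 1`, `c = 2` in `Fin 3`. -/
def chaconMorphism (i : Fin 3) : List (Fin 3) :=
  if i = 0 then [0, 0, 1, 2] else if i = 1 then [1, 2] else [0, 1, 2]

def chaconSub (l : List (Fin 3)) : List (Fin 3) := (l.map chaconMorphism).flatten

/-- The Chacon set: the set of factors of the fixpoint `f^ω(a)`, equivalently the set of
words which are factors of some `fⁿ(a)`. -/
def chaconSet : Set (List (Fin 3)) := {w | ∃ n : ℕ, w <:+: chaconSub^[n] [0]}

/-!
Every letter has a nonempty image under `f`, so a factor `w` of `f(u)` already occurs in `f(v)`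
for some factor `v` of `u` with `|v| ≤ |w|`. Since every factor of length at most 5 of `f⁴(a)`
occurs in `f³(a)` (a finite check), induction on `n` shows the same for every `fⁿ(a)`: the words
of length at most 5 of the Chacon set are exactly the factors of `f³(a)`. The extensions of
`abc` and `bca` only involve such words, so `m(abc)` and `m(bca)` are counted inside `f³(a)`.
-/

end Paper

namespace List

variable {α β : Type*} {σ : α → List β}

theorem IsInfix.exists_eq_take_drop {w l : List α} (h : w <:+: l) :
    ∃ i ≤ l.length, w = (l.drop i).take w.length := by
  obtain ⟨t, hwt, htl⟩ := infix_iff_prefix_suffix.mp h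
  refine ⟨l.length - t.length, Nat.sub_le _ _, ?_⟩
  rw [← suffix_iff_eq_drop.mp htl]
  exact prefix_iff_eq_take.mp hwt

theorem exists_prefix_of_prefix_flatMap (hσ : ∀ a, σ a ≠ []) {u : List α} {w : List β}
    (h : w <+: u.flatMap σ) : ∃ v, v <+: u ∧ v.length ≤ w.length ∧ w <+: v.flatMap σ := by
  induction u generalizing w with
  | nil => exact ⟨[], prefix_rfl, by simp, by simpa using h⟩
  | cons a u ih =>
    by_cases hw : w = []
    · exact ⟨[], nil_prefix, by simp [hw], by simp [hw]⟩
    rw [flatMap_cons] at h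
    rcases le_or_gt w.length (σ a).length with hle | hlt
    · refine ⟨[a], cons_prefix_cons.mpr ⟨rfl, nil_prefix⟩,
        length_pos_iff.mpr hw, ?_⟩
      simpa using prefix_of_prefix_length_le h (prefix_append _ _) hle
    · obtain ⟨w', rfl⟩ := prefix_of_prefix_length_le (prefix_append _ _) h hlt.le
      obtain ⟨v, hvu, hvw, hwv⟩ := ih ((prefix_append_right_inj _).mp h)
      refine ⟨a :: v, cons_prefix_cons.mpr ⟨rfl, hvu⟩, ?_, ?_⟩
      · have := length_pos_iff.mpr (hσ a)
        simp only [length_cons, length_append]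
        omega
      · rw [flatMap_cons]
        exact (prefix_append_right_inj _).mpr hwv

theorem exists_infix_of_infix_flatMap (hσ : ∀ a, σ a ≠ []) {u : List α} {w : List β}
    (h : w <:+: u.flatMap σ) : ∃ v, v <:+: u ∧ v.length ≤ w.length ∧ w <:+: v.flatMap σ := by
  by_cases hw : w = []
  · exact ⟨[], nil_infix, by simp [hw], by simp [hw]⟩
  induction u generalizing w with
  | nil => exact absurd (eq_nil_of_infix_nil h) hw
  | cons a u ih =>
    rw [flatMap_cons] at h
    rcases infix_append_iff_ne_nil.mp h with ha | hu | ⟨w₁, w₂, hw₁, -, rfl, hs, hp⟩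
    · exact ⟨[a], ⟨[], u, rfl⟩, length_pos_iff.mpr hw, by simpa using ha⟩
    · obtain ⟨v, hvu, hvw, hwv⟩ := ih hu hw
      exact ⟨v, hvu.trans (suffix_cons a u).isInfix, hvw, hwv⟩
    · obtain ⟨v, hvu, hvw, hwv⟩ := exists_prefix_of_prefix_flatMap hσ hp
      refine ⟨a :: v, (cons_prefix_cons.mpr ⟨rfl, hvu⟩).isInfix, ?_, ?_⟩
      · have := length_pos_iff.mpr hw₁
        simp only [length_cons, length_append]
        omega
      · rw [flatMap_cons]
        exact infix_append_iff.mpr (Or.inr (Or.inr ⟨w₁, w₂, rfl, hs, hwv⟩))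

theorem infix_iterate_flatMap_of_stable {σ : α → List α} (hσ : ∀ a, σ a ≠ []) {x : List α}
    {N k : ℕ} (hx : ∀ w, w.length ≤ k → w <:+: x → w <:+: (flatMap σ)^[N] x)
    (hstable : ∀ w, w.length ≤ k → w <:+: (flatMap σ)^[N + 1] x →
      w <:+: (flatMap σ)^[N] x) (n : ℕ) {w : List α} (hw : w.length ≤ k)
    (h : w <:+: (flatMap σ)^[n] x) : w <:+: (flatMap σ)^[N] x := by
  induction n generalizing w with
  | zero => exact hx w hw h
  | succ n ih =>
    rw [Function.iterate_succ_apply'] at h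
    obtain ⟨v, hv, hvw, hwv⟩ := exists_infix_of_infix_flatMap hσ h
    refine hstable w hw (hwv.trans ?_)
    rw [Function.iterate_succ_apply']
    exact (ih (hvw.trans hw) hv).flatMap σ

end List

namespace Paper

theorem chaconSub_eq_flatMap : chaconSub = List.flatMap chaconMorphism := rfl

theorem chaconMorphism_ne_nil (a : Fin 3) : chaconMorphism a ≠ [] := by
  unfold chaconMorphism
  split_ifs <;> simp

theorem take_drop_chacon_four_infix_chacon_three :
    ∀ i ≤ (chaconSub^[4] [0]).length, ∀ k ≤ 5,
      ((chaconSub^[4] [0]).drop i).take k <:+: chaconSub^[3] [0] := by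
  decide +kernel

theorem mem_chaconSet_iff {w : List (Fin 3)} (hw : w.length ≤ 5) :
    w ∈ chaconSet ↔ w <:+: chaconSub^[3] [0] := by
  refine ⟨fun ⟨n, hn⟩ => ?_, fun h => ⟨3, h⟩⟩
  rw [chaconSub_eq_flatMap] at hn ⊢
  refine List.infix_iterate_flatMap_of_stable chaconMorphism_ne_nil
    (fun w _ hw => hw.trans (by decide)) (fun w hw h => ?_) n hw hn
  obtain ⟨i, hi, hwi⟩ := h.exists_eq_take_drop
  rw [hwi]
  exact take_drop_chacon_four_infix_chacon_three i hi _ hw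

noncomputable def bilateralMultiplicity {A : Type*} (S : Set (List A)) (w : List A) : ℤ :=
  (Eext S w).ncard - (Lext S w).ncard - (Rext S w).ncard + 1

section ChaconExtensions

variable {w : List (Fin 3)}

theorem Lext_chaconSet (hw : w.length ≤ 4) :
    Lext chaconSet w = ↑(Finset.univ.filter fun a => a :: w <:+: chaconSub^[3] [0]) := by
  ext a
  simp [Lext, mem_chaconSet_iff (show (a :: w).length ≤ 5 by simp; omega)]

theorem Rext_chaconSet (hw : w.length ≤ 4) :
    Rext chaconSet w = ↑(Finset.univ.filter fun b => w ++ [b] <:+: chaconSub^[3] [0]) := by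
  ext b
  simp [Rext, mem_chaconSet_iff (show (w ++ [b]).length ≤ 5 by simp; omega)]

theorem Eext_chaconSet (hw : w.length ≤ 3) :
    Eext chaconSet w = ↑(Finset.univ.filter fun p : Fin 3 × Fin 3 =>
      p.1 :: (w ++ [p.2]) <:+: chaconSub^[3] [0]) := by
  ext p
  simp [Eext, mem_chaconSet_iff (show (p.1 :: (w ++ [p.2])).length ≤ 5 by simp; omega)]

theorem bilateralMultiplicity_chaconSet (hw : w.length ≤ 3) :
    bilateralMultiplicity chaconSet w =
      (Finset.univ.filter fun p : Fin 3 × Fin 3 =>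
          p.1 :: (w ++ [p.2]) <:+: chaconSub^[3] [0]).card
        - (Finset.univ.filter fun a => a :: w <:+: chaconSub^[3] [0]).card
        - (Finset.univ.filter fun b => w ++ [b] <:+: chaconSub^[3] [0]).card + 1 := by
  rw [bilateralMultiplicity, Eext_chaconSet hw, Lext_chaconSet (by omega),
    Rext_chaconSet (by omega), Set.ncard_coe_finset, Set.ncard_coe_finset,
    Set.ncard_coe_finset]

end ChaconExtensions

theorem bilateralMultiplicity_chaconSet_abc : bilateralMultiplicity chaconSet [0, 1, 2] = 1 := by
  rw [bilateralMultiplicity_chaconSet (by simp)]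
  decide +kernel

theorem bilateralMultiplicity_chaconSet_bca :
    bilateralMultiplicity chaconSet [1, 2, 0] = -1 := by
  rw [bilateralMultiplicity_chaconSet (by simp)]
  decide +kernel

/-- In the Chacon set, the word `abc` is strong (`m(abc) = 1`), the
word `bca` is weak (`m(bca) = -1`); in particular the Chacon set is not neutral. -/
theorem chacon_not_neutral :
    (((Eext chaconSet [0, 1, 2]).ncard : ℤ) - (Lext chaconSet [0, 1, 2]).ncard
        - (Rext chaconSet [0, 1, 2]).ncard + 1 = 1) ∧
    (((Eext chaconSet [1, 2, 0]).ncard : ℤ) - (Lext chaconSet [1, 2, 0]).ncard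
        - (Rext chaconSet [1, 2, 0]).ncard + 1 = -1) ∧
    ¬ (∀ w ∈ chaconSet, ((Eext chaconSet w).ncard : ℤ) - (Lext chaconSet w).ncard
        - (Rext chaconSet w).ncard + 1 = 0) := by
  refine ⟨bilateralMultiplicity_chaconSet_abc, bilateralMultiplicity_chaconSet_bca,
    fun hneutral => ?_⟩
  have habc : [0, 1, 2] ∈ chaconSet := (mem_chaconSet_iff (by simp)).mpr (by decide)
  have : bilateralMultiplicity chaconSet [0, 1, 2] = 0 := hneutral _ habc
  rw [bilateralMultiplicity_chaconSet_abc] at this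
  exact one_ne_zero this

end Paper
end
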